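/- Let G be a finite simple graph on n ≥ 2 vertices and let k ≥ 0 be an integer. Then α_{k-reg}(G) = 1 if and only if k = 0 and, for every integer i, the set D_i(G) of vertices of degree i in G induces a clique in G (i.e., any two distinct vertices of G with the same degree are adjacent). -/

import Mathlib

open SimpleGraph

/-- The degree of a vertex `v` in `G`: the number of neighbors of `v`. -/
noncomputable def degN {V : Type*} (G : SimpleGraph V) (v : V) : ℕ := {u | G.Adj v u}.ncard

/-- A set of vertices is `k`-independent if the induced subgraph has maximum degree at
most `k`, i.e. every vertex of the set has at most `k` neighbors inside the set. -/
def IsKIndepSet {V : Type*} (G : SimpleGraph V) (k : ℕ) (S : Set V) : Prop :=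
  ∀ v ∈ S, {u | u ∈ S ∧ G.Adj v u}.ncard ≤ k

/-- A set of vertices is regular if all its vertices have the same degree in `G`. -/
def IsRegularSet {V : Type*} (G : SimpleGraph V) (S : Set V) : Prop :=
  ∀ u ∈ S, ∀ v ∈ S, degN G u = degN G v

/-- The regular `k`-independence number `α_{k-reg}(G)`: the maximum cardinality of a set
of vertices that is both `k`-independent and regular. -/
noncomputable def regKIndepNum {V : Type*} (G : SimpleGraph V) (k : ℕ) : ℕ :=
  sSup {m : ℕ | ∃ S : Set V, S.ncard = m ∧ IsKIndepSet G k S ∧ IsRegularSet G S}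

/-!
`α_{k-reg}(G) = 1` says that every k-independent regular set has at most one vertex. Every pair
of vertices is 1-independent, and a graph on at least two vertices has two distinct vertices of
equal degree (the degrees `0` and `n - 1` cannot both occur), which form a regular pair; hence
`k = 0`. A pair is 0-independent exactly when it is not an edge, and any 0-independent regular
set with two vertices contains such a pair.
-/

section

variable {V : Type*} (G : SimpleGraph V)

lemma degN_eq_degree [Fintype V] [DecidableRel G.Adj] (v : V) : degN G v = G.degree v := by
  rw [degN, ← card_neighborFinset_eq_degree, ← Set.ncard_coe_finset]
  congr 1
  ext u
  simp

theorem SimpleGraph.exists_ne_degree_eq [Fintype V] [DecidableRel G.Adj]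
    (hn : 2 ≤ Fintype.card V) :
    ∃ u v, u ≠ v ∧ G.degree u = G.degree v := by
  by_cases huniv : ∃ v, G.IsUniversal v
  · obtain ⟨v, hv⟩ := huniv
    have hpos : ∀ w, 0 < G.degree w := by
      intro w
      rw [degree_pos_iff_exists_adj]
      by_cases hw : w = v
      · obtain ⟨w', hw'⟩ := Fintype.exists_ne_of_one_lt_card (by omega) v
        exact ⟨w', hw ▸ hv hw'.symm⟩
      · exact ⟨v, (hv (Ne.symm hw)).symm⟩
    obtain ⟨x, -, y, -, hxy, hdeg⟩ := Finset.exists_ne_map_eq_of_card_lt_of_maps_to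
      (s := (Finset.univ : Finset V)) (t := Finset.Icc 1 (Fintype.card V - 1)) (by simp; omega)
      (f := fun w => G.degree w) fun w _ => by
        simpa using ⟨hpos w, Nat.le_sub_one_of_lt (G.degree_lt_card_verts w)⟩
    exact ⟨x, y, hxy, hdeg⟩
  · push Not at huniv
    obtain ⟨x, -, y, -, hxy, hdeg⟩ := Finset.exists_ne_map_eq_of_card_lt_of_maps_to
      (s := (Finset.univ : Finset V)) (t := Finset.range (Fintype.card V - 1)) (by simp; omega)
      (f := fun w => G.degree w) fun w _ => by simpa using (G.degree_lt_card_sub_one w).2 (huniv w)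
    exact ⟨x, y, hxy, hdeg⟩

theorem exists_ne_degN_eq [Fintype V] (hn : 2 ≤ Fintype.card V) :
    ∃ u v, u ≠ v ∧ degN G u = degN G v := by
  classical
  simpa only [degN_eq_degree] using G.exists_ne_degree_eq hn

section

variable {G} {k : ℕ} {S : Set V}

lemma IsKIndepSet.of_le {k' : ℕ} (h : IsKIndepSet G k S) (hk : k ≤ k') : IsKIndepSet G k' S :=
  fun v hv => (h v hv).trans hk

lemma isKIndepSet_zero_iff [Finite V] :
    IsKIndepSet G 0 S ↔ ∀ u ∈ S, ∀ v ∈ S, ¬ G.Adj u v := by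
  refine forall₂_congr fun u _ => ?_
  rw [Nat.le_zero, Set.ncard_eq_zero (Set.toFinite _)]
  simp [Set.eq_empty_iff_forall_notMem]

variable (G) in
lemma isKIndepSet_ncard_sub_one [Finite V] (S : Set V) : IsKIndepSet G (S.ncard - 1) S := by
  intro v hv
  calc {u | u ∈ S ∧ G.Adj v u}.ncard
      ≤ (S \ {v}).ncard :=
        Set.ncard_le_ncard fun u hu => ⟨hu.1, fun h => G.loopless.irrefl v (h ▸ hu.2)⟩
    _ = S.ncard - 1 := Set.ncard_sdiff_singleton_of_mem hv

lemma isKIndepSet_pair_of_not_adj [Finite V] {u v : V} (h : ¬ G.Adj u v) :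
    IsKIndepSet G 0 {u, v} := by
  refine isKIndepSet_zero_iff.2 ?_
  rintro a (rfl | rfl) b (rfl | rfl) hab
  exacts [G.loopless.irrefl _ hab, h hab, h hab.symm, G.loopless.irrefl _ hab]

lemma isRegularSet_singleton (v : V) : IsRegularSet G {v} := by
  rintro _ rfl _ rfl
  rfl

lemma isRegularSet_pair {u v : V} (h : degN G u = degN G v) : IsRegularSet G {u, v} := by
  rintro a (rfl | rfl) b (rfl | rfl) <;> simp [h]

end

lemma ncard_le_regKIndepNum [Finite V] {k : ℕ} {S : Set V} (hind : IsKIndepSet G k S)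
    (hreg : IsRegularSet G S) : S.ncard ≤ regKIndepNum G k :=
  le_csSup ⟨Nat.card V, by rintro _ ⟨T, rfl, -, -⟩; exact Set.ncard_le_card T⟩
    ⟨S, rfl, hind, hreg⟩

theorem regKIndepNum_eq_one_iff [Finite V] [Nonempty V] (k : ℕ) :
    regKIndepNum G k = 1 ↔
      ∀ S : Set V, IsKIndepSet G k S → IsRegularSet G S → S.Subsingleton := by
  obtain ⟨v⟩ := ‹Nonempty V›
  have hind : IsKIndepSet G k {v} := (isKIndepSet_ncard_sub_one G {v}).of_le (by simp)
  have hreg : IsRegularSet G {v} := isRegularSet_singleton v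
  constructor
  · intro h S hind hreg
    rw [← Set.ncard_le_one_iff_subsingleton]
    exact h ▸ ncard_le_regKIndepNum G hind hreg
  · intro h
    refine le_antisymm (csSup_le ⟨1, {v}, Set.ncard_singleton v, hind, hreg⟩ ?_) ?_
    · rintro _ ⟨S, rfl, hindS, hregS⟩
      exact Set.ncard_le_one_iff_subsingleton.2 (h S hindS hregS)
    · simpa using ncard_le_regKIndepNum G hind hreg

end

/-- For a graph `G` on `n ≥ 2` vertices, `α_{k-reg}(G) = 1` if and only if `k = 0` and
any two distinct vertices of the same degree are adjacent (i.e. every `D_i(G)` induces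
a clique). -/
theorem stmt_16 {V : Type*} [Fintype V] (G : SimpleGraph V) (k : ℕ)
    (hn : 2 ≤ Fintype.card V) :
    regKIndepNum G k = 1 ↔
      k = 0 ∧ ∀ u v : V, u ≠ v → degN G u = degN G v → G.Adj u v := by
  have : Nonempty V := Fintype.card_pos_iff.mp (by omega)
  rw [regKIndepNum_eq_one_iff]
  constructor
  · intro h
    have hpair : ∀ u v, u ≠ v → degN G u = degN G v → ¬ IsKIndepSet G k {u, v} :=
      fun u v huv hdeg hind => huv (h _ hind (isRegularSet_pair hdeg) (by simp) (by simp))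
    refine ⟨?_, fun u v huv hdeg => ?_⟩
    · obtain ⟨u, v, huv, hdeg⟩ := exists_ne_degN_eq G hn
      by_contra hk
      exact hpair u v huv hdeg
        ((isKIndepSet_ncard_sub_one G _).of_le (by rw [Set.ncard_pair huv]; omega))
    · by_contra hadj
      exact hpair u v huv hdeg ((isKIndepSet_pair_of_not_adj hadj).of_le k.zero_le)
  · rintro ⟨rfl, hclique⟩ S hind hreg a ha b hb
    by_contra hab
    exact isKIndepSet_zero_iff.1 hind a ha b hb (hclique a b hab (hreg a ha b hb))
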